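/- For the family of dyadic cubes in ℝⁿ (with Q_x the set of dyadic cubes containing x) and Lebesgue measure mⁿ, the Hardy–Littlewood maximal constant equals exactly 1: for every set function F on dyadic cubes and r > 0, mⁿ{x : sup_{Q dyadic, x ∈ Q} F(Q)/mⁿ(Q) > r} ≤ r⁻¹ ‖F‖, and no constant smaller than 1 works. -/

import Mathlib

/-!
Upper bound: the cubes on which `F(Q) > r mⁿ(Q)` have measure at most `r⁻¹ ‖F‖`, so each lies in a
maximal one, because a dyadic cube has only finitely many dyadic ancestors of bounded measure. Since
dyadic cubes are nested or disjoint, the maximal bad cubes are pairwise disjoint; they cover the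
level set, and summing `mⁿ(Q) ≤ r⁻¹ F(Q)` over them gives `r⁻¹ ‖F‖`.

Lower bound: for `F` concentrated on one cube `Q₀` with `F(Q₀) = mⁿ(Q₀)`, the maximal function is
`≥ 1` on `Q₀` while `‖F‖ = mⁿ(Q₀)`; testing `r < 1` forces `r ≤ c`.
-/

open Set MeasureTheory ENNReal

/-- The norm `‖F‖_𝒬`: supremum of finite sums of `F` over pairwise disjoint members of `𝒬`. -/
noncomputable def hlNorm {X : Type*} (𝒬 : Set (Set X)) (F : Set X → ℝ≥0∞) : ℝ≥0∞ :=
  ⨆ s : {s : Finset (Set X) // ↑s ⊆ 𝒬 ∧ (s : Set (Set X)).Pairwise Disjoint}, ∑ Q ∈ s.1, F Q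

/-- The abstract maximal function `M F(x) = sup_{Q ∈ 𝒬ₓ} F(Q)/μ(Q)`. -/
noncomputable def hlMax {X : Type*} (Qx : X → Set (Set X)) (μ : Set X → ℝ≥0∞)
    (F : Set X → ℝ≥0∞) (x : X) : ℝ≥0∞ :=
  ⨆ Q ∈ Qx x, F Q / μ Q

/-- The dyadic cube `2^ℓ m + 2^ℓ [0,1)ⁿ` in `ℝⁿ`. -/
def dyadicCube (n : ℕ) (ℓ : ℤ) (m : Fin n → ℤ) : Set (Fin n → ℝ) :=
  {x | ∀ i, (2 : ℝ) ^ ℓ * m i ≤ x i ∧ x i < (2 : ℝ) ^ ℓ * (m i + 1)}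

section HardyLittlewood

variable {X : Type*}

lemma sum_le_hlNorm {𝒬 : Set (Set X)} (F : Set X → ℝ≥0∞) {s : Finset (Set X)}
    (hs : ↑s ⊆ 𝒬) (hdisj : (s : Set (Set X)).Pairwise Disjoint) :
    ∑ Q ∈ s, F Q ≤ hlNorm 𝒬 F :=
  le_iSup_of_le (α := ℝ≥0∞) ⟨s, hs, hdisj⟩ le_rfl

lemma le_hlNorm {𝒬 : Set (Set X)} (F : Set X → ℝ≥0∞) {Q : Set X} (hQ : Q ∈ 𝒬) :
    F Q ≤ hlNorm 𝒬 F := by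
  simpa using sum_le_hlNorm F (s := {Q}) (by simpa using hQ) (by simp)

lemma tsum_le_hlNorm {𝒯 𝒬 : Set (Set X)} (F : Set X → ℝ≥0∞) (h𝒯 : 𝒯 ⊆ 𝒬)
    (hdisj : 𝒯.Pairwise Disjoint) : ∑' Q : 𝒯, F Q ≤ hlNorm 𝒬 F := by
  rw [ENNReal.tsum_eq_iSup_sum]
  refine iSup_le fun t => ?_
  rw [← Finset.sum_image fun _ _ _ _ => Subtype.ext]
  refine sum_le_hlNorm F ?_ ?_
  · simp only [Finset.coe_image]
    rintro _ ⟨Q, -, rfl⟩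
    exact h𝒯 Q.2
  · simp only [Finset.coe_image]
    rintro _ ⟨Q, -, rfl⟩ _ ⟨Q', -, rfl⟩ hne
    exact hdisj Q.2 Q'.2 hne

lemma hlNorm_le_of_eq_zero {𝒬 : Set (Set X)} {F : Set X → ℝ≥0∞} {Q₀ : Set X}
    (hF : ∀ Q ≠ Q₀, F Q = 0) : hlNorm 𝒬 F ≤ F Q₀ := by
  classical
  refine iSup_le fun s => ?_
  calc ∑ Q ∈ s.1, F Q ≤ ∑ Q ∈ insert Q₀ s.1, F Q :=
        Finset.sum_le_sum_of_subset (Finset.subset_insert _ _)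
    _ = F Q₀ := Finset.sum_eq_single_of_mem _ (Finset.mem_insert_self _ _)
        fun Q _ hQ => hF Q hQ

lemma pairwise_disjoint_setOf_maximal_of_nested {ℬ : Set (Set X)}
    (hnest : ∀ Q ∈ ℬ, ∀ Q' ∈ ℬ, ¬Disjoint Q Q' → Q ⊆ Q' ∨ Q' ⊆ Q) :
    {Q | Maximal (· ∈ ℬ) Q}.Pairwise Disjoint := by
  intro Q hQ Q' hQ' hne
  by_contra hQQ'
  rcases hnest Q hQ.prop Q' hQ'.prop hQQ' with h | h
  · exact hne (hQ.eq_of_le hQ'.prop h)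
  · exact hne (hQ'.eq_of_ge hQ.prop h)

lemma exists_subset_maximal_of_finite {ℬ : Set (Set X)}
    (hfin : ∀ Q ∈ ℬ, {Q' ∈ ℬ | Q ⊆ Q'}.Finite) {Q : Set X} (hQ : Q ∈ ℬ) :
    ∃ Q', Q ⊆ Q' ∧ Maximal (· ∈ ℬ) Q' := by
  obtain ⟨Q', hQQ', hmax⟩ := (hfin Q hQ).exists_le_maximal ⟨hQ, subset_rfl⟩
  exact ⟨Q', hQQ', hmax.prop.1, fun Q'' hQ'' h => hmax.2 ⟨hQ'', hQQ'.trans h⟩ h⟩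

variable [MeasurableSpace X] (μ : Measure X)

lemma measure_sUnion_le_mul_hlNorm {𝒯 𝒬 : Set (Set X)} {F : Set X → ℝ≥0∞} {a : ℝ≥0∞}
    (h𝒯 : 𝒯.Countable) (h𝒯𝒬 : 𝒯 ⊆ 𝒬) (hdisj : 𝒯.Pairwise Disjoint)
    (hμ : ∀ Q ∈ 𝒯, μ Q ≤ a * F Q) : μ (⋃₀ 𝒯) ≤ a * hlNorm 𝒬 F :=
  calc μ (⋃₀ 𝒯) ≤ ∑' Q : 𝒯, μ Q := by
        rw [sUnion_eq_biUnion]; exact measure_biUnion_le μ h𝒯 id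
    _ ≤ ∑' Q : 𝒯, a * F Q := ENNReal.tsum_le_tsum fun Q => hμ Q Q.2
    _ = a * ∑' Q : 𝒯, F Q := ENNReal.tsum_mul_left
    _ ≤ a * hlNorm 𝒬 F := by gcongr; exact tsum_le_hlNorm F h𝒯𝒬 hdisj

lemma le_inv_mul_of_lt_div {a b r : ℝ≥0∞} (hr0 : r ≠ 0) (hr : r ≠ ∞) (h : r < a / b) :
    b ≤ r⁻¹ * a :=
  calc b = r⁻¹ * (r * b) := by rw [← mul_assoc, ENNReal.inv_mul_cancel hr0 hr, one_mul]
    _ ≤ r⁻¹ * a := by gcongr; exact (ENNReal.mul_lt_of_lt_div h).le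

theorem measure_lt_hlMax_le_of_nested {𝒬 : Set (Set X)} (h𝒬 : 𝒬.Countable)
    (hnest : ∀ Q ∈ 𝒬, ∀ Q' ∈ 𝒬, ¬Disjoint Q Q' → Q ⊆ Q' ∨ Q' ⊆ Q)
    (hfin : ∀ Q ∈ 𝒬, ∀ C ≠ ∞, {Q' ∈ 𝒬 | Q ⊆ Q' ∧ μ Q' ≤ C}.Finite)
    (F : Set X → ℝ≥0∞) {r : ℝ≥0∞} (hr0 : r ≠ 0) (hr : r ≠ ∞) :
    μ {x | r < hlMax (fun x => {Q | Q ∈ 𝒬 ∧ x ∈ Q}) (μ ·) F x} ≤ r⁻¹ * hlNorm 𝒬 F := by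
  by_cases hN : hlNorm 𝒬 F = ∞
  · simp [hN, hr]
  set ℬ := {Q ∈ 𝒬 | r < F Q / μ Q}
  have hbad : ∀ Q ∈ ℬ, μ Q ≤ r⁻¹ * F Q := fun Q hQ => le_inv_mul_of_lt_div hr0 hr hQ.2
  have hfinℬ : ∀ Q ∈ ℬ, {Q' ∈ ℬ | Q ⊆ Q'}.Finite := fun Q hQ =>
    (hfin Q hQ.1 _ (mul_ne_top (inv_ne_top.2 hr0) hN)).subset fun Q' ⟨hQ', hQQ'⟩ =>
      ⟨hQ'.1, hQQ', (hbad Q' hQ').trans (by gcongr; exact le_hlNorm F hQ'.1)⟩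
  have hcover : {x | r < hlMax (fun x => {Q | Q ∈ 𝒬 ∧ x ∈ Q}) (μ ·) F x} ⊆
      ⋃₀ {Q | Maximal (· ∈ ℬ) Q} := by
    intro x hx
    obtain ⟨Q, ⟨hQ𝒬, hxQ⟩, hrQ⟩ := lt_biSup_iff.1 (show r < hlMax _ _ F x from hx)
    obtain ⟨Q', hQQ', hmax⟩ := exists_subset_maximal_of_finite hfinℬ ⟨hQ𝒬, hrQ⟩
    exact ⟨Q', hmax, hQQ' hxQ⟩
  calc _ ≤ μ (⋃₀ {Q | Maximal (· ∈ ℬ) Q}) := measure_mono hcover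
    _ ≤ r⁻¹ * hlNorm 𝒬 F :=
      measure_sUnion_le_mul_hlNorm μ (h𝒬.mono fun Q hQ => hQ.prop.1)
        (fun Q hQ => hQ.prop.1)
        (pairwise_disjoint_setOf_maximal_of_nested fun Q hQ Q' hQ' => hnest Q hQ.1 Q' hQ'.1)
        fun Q hQ => hbad Q hQ.prop

theorem one_le_of_measure_lt_hlMax_le (Qx : X → Set (Set X)) (𝒬 : Set (Set X)) {Q₀ : Set X}
    (hQ₀ : ∀ x ∈ Q₀, Q₀ ∈ Qx x) (h0 : μ Q₀ ≠ 0) (htop : μ Q₀ ≠ ∞) {c : ℝ≥0∞}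
    (hc : ∀ F : Set X → ℝ≥0∞, ∀ r : ℝ≥0∞, 0 < r → r ≠ ∞ →
      μ {x | r < hlMax Qx (μ ·) F x} ≤ c * r⁻¹ * hlNorm 𝒬 F) :
    1 ≤ c := by
  classical
  set F : Set X → ℝ≥0∞ := fun Q => if Q = Q₀ then μ Q₀ else 0
  have hnorm : hlNorm 𝒬 F ≤ μ Q₀ :=
    (hlNorm_le_of_eq_zero fun Q hQ => if_neg hQ).trans_eq (if_pos rfl)
  have hmax : ∀ x ∈ Q₀, 1 ≤ hlMax Qx (μ ·) F x := fun x hx =>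
    le_iSup₂_of_le Q₀ (hQ₀ x hx) (by simp [F, ENNReal.div_self h0 htop])
  refine le_of_forall_lt_imp_le_of_dense fun r hr1 => ?_
  rcases eq_zero_or_pos r with rfl | hr0
  · exact zero_le
  have hrtop : r ≠ ∞ := (hr1.trans one_lt_top).ne
  have h : 1 * μ Q₀ ≤ c * r⁻¹ * μ Q₀ :=
    calc 1 * μ Q₀ ≤ μ {x | r < hlMax Qx (μ ·) F x} := by
          rw [one_mul]; exact measure_mono fun x hx => hr1.trans_le (hmax x hx)
      _ ≤ c * r⁻¹ * hlNorm 𝒬 F := hc F r hr0 hrtop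
      _ ≤ c * r⁻¹ * μ Q₀ := by gcongr
  rw [ENNReal.mul_le_mul_iff_left h0 htop, ← div_eq_mul_inv,
    ENNReal.le_div_iff_mul_le (.inl hr0.ne') (.inl hrtop), one_mul] at h
  exact h

end HardyLittlewood

section Dyadic

variable {n : ℕ}

def dyadicCubes (n : ℕ) : Set (Set (Fin n → ℝ)) := {Q | ∃ ℓ m, Q = dyadicCube n ℓ m}

lemma dyadicCube_eq_pi (ℓ : ℤ) (m : Fin n → ℤ) :
    dyadicCube n ℓ m = univ.pi fun i => Ico ((2 : ℝ) ^ ℓ * m i) ((2 : ℝ) ^ ℓ * (m i + 1)) := by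
  ext x; simp [dyadicCube, Set.mem_pi]

lemma dyadicCube_zero (ℓ : ℤ) (m : Fin 0 → ℤ) : dyadicCube 0 ℓ m = univ :=
  eq_univ_of_forall fun _ i => i.elim0

lemma volume_dyadicCube (ℓ : ℤ) (m : Fin n → ℤ) :
    volume (dyadicCube n ℓ m) = ENNReal.ofReal ((2 : ℝ) ^ ℓ) ^ n := by
  simp [dyadicCube_eq_pi, volume_pi_pi, Real.volume_Ico, ← mul_sub]

lemma volume_dyadicCube_ne_zero (ℓ : ℤ) (m : Fin n → ℤ) : volume (dyadicCube n ℓ m) ≠ 0 := by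
  rw [volume_dyadicCube]
  exact pow_ne_zero _ (ENNReal.ofReal_pos.2 (zpow_pos two_pos ℓ)).ne'

lemma volume_dyadicCube_ne_top (ℓ : ℤ) (m : Fin n → ℤ) : volume (dyadicCube n ℓ m) ≠ ∞ := by
  rw [volume_dyadicCube]
  exact pow_ne_top ofReal_ne_top

lemma volume_dyadicCube_le_volume_dyadicCube_iff (hn : n ≠ 0) {ℓ ℓ' : ℤ} (m m' : Fin n → ℤ) :
    volume (dyadicCube n ℓ m) ≤ volume (dyadicCube n ℓ' m') ↔ ℓ ≤ ℓ' := by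
  rw [volume_dyadicCube, volume_dyadicCube, ENNReal.pow_le_pow_left_iff hn,
    ENNReal.ofReal_le_ofReal_iff (by positivity),
    zpow_le_zpow_iff_right₀ (one_lt_two : (1 : ℝ) < 2)]

lemma exists_lt_volume_dyadicCube (hn : n ≠ 0) {C : ℝ≥0∞} (hC : C ≠ ∞) :
    ∃ ℓ : ℤ, C < volume (dyadicCube n ℓ 0) := by
  obtain ⟨k, hk⟩ := ENNReal.exists_nat_gt hC
  refine ⟨k, hk.trans ?_⟩
  rw [volume_dyadicCube, zpow_natCast, ENNReal.ofReal_pow zero_le_two, ENNReal.ofReal_ofNat]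
  calc (k : ℝ≥0∞) < 2 ^ k := by exact_mod_cast Nat.lt_two_pow_self
    _ ≤ (2 ^ k) ^ n := le_self_pow₀ (one_le_pow₀ one_le_two) hn

lemma Ico_mul_subset_Ico_mul {s t : ℝ} (hs : 0 < s) {a b N : ℤ}
    (ha : t ∈ Ico (s * a) (s * (a + 1))) (hb : t ∈ Ico (s * (N * b)) (s * (N * (b + 1)))) :
    Ico (s * a) (s * (a + 1)) ⊆ Ico (s * (N * b)) (s * (N * (b + 1))) := by
  have hlow : (N * b : ℝ) < a + 1 := lt_of_mul_lt_mul_left (hb.1.trans_lt ha.2) hs.le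
  have hup : (a : ℝ) < N * (b + 1) := lt_of_mul_lt_mul_left (ha.1.trans_lt hb.2) hs.le
  -- integrality upgrades the overlap to containment of the endpoints
  have hlow' : (N * b : ℝ) ≤ a := by
    exact_mod_cast Int.lt_add_one_iff.1 (by exact_mod_cast hlow)
  have hup' : (a + 1 : ℝ) ≤ N * (b + 1) := by
    exact_mod_cast Int.add_one_le_iff.2 (by exact_mod_cast hup)
  exact Ico_subset_Ico (by gcongr) (by gcongr)

lemma dyadicCube_subset_of_le {ℓ ℓ' : ℤ} {m m' : Fin n → ℤ} (hℓ : ℓ ≤ ℓ') {x : Fin n → ℝ}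
    (hx : x ∈ dyadicCube n ℓ m) (hx' : x ∈ dyadicCube n ℓ' m') :
    dyadicCube n ℓ m ⊆ dyadicCube n ℓ' m' := by
  obtain ⟨k, rfl⟩ := Int.le.dest hℓ
  have hscale : ∀ t : ℝ, (2 : ℝ) ^ (ℓ + k) * t = 2 ^ ℓ * ((2 ^ k : ℤ) * t) := fun t => by
    rw [zpow_add₀ two_ne_zero, zpow_natCast]; push_cast; ring
  rw [dyadicCube_eq_pi, dyadicCube_eq_pi] at *
  simp only [hscale] at *
  exact pi_mono fun i _ =>
    Ico_mul_subset_Ico_mul (zpow_pos two_pos ℓ) (hx i trivial) (hx' i trivial)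

lemma dyadicCubes_nested {Q Q' : Set (Fin n → ℝ)} (hQ : Q ∈ dyadicCubes n)
    (hQ' : Q' ∈ dyadicCubes n) (h : ¬Disjoint Q Q') : Q ⊆ Q' ∨ Q' ⊆ Q := by
  obtain ⟨ℓ, m, rfl⟩ := hQ
  obtain ⟨ℓ', m', rfl⟩ := hQ'
  obtain ⟨x, hx, hx'⟩ := not_disjoint_iff.1 h
  rcases le_total ℓ ℓ' with hℓ | hℓ
  · exact .inl (dyadicCube_subset_of_le hℓ hx hx')
  · exact .inr (dyadicCube_subset_of_le hℓ hx' hx)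

lemma countable_dyadicCubes : (dyadicCubes n).Countable :=
  (countable_range fun p : ℤ × (Fin n → ℤ) => dyadicCube n p.1 p.2).mono <| by
    rintro _ ⟨ℓ, m, rfl⟩
    exact ⟨(ℓ, m), rfl⟩

lemma finite_dyadicCubes_superset_volume_le {Q : Set (Fin n → ℝ)} (hQ : Q ∈ dyadicCubes n)
    {C : ℝ≥0∞} (hC : C ≠ ∞) : {Q' ∈ dyadicCubes n | Q ⊆ Q' ∧ volume Q' ≤ C}.Finite := by
  obtain rfl | hn := eq_or_ne n 0
  · refine (finite_singleton univ).subset ?_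
    rintro _ ⟨⟨ℓ, m, rfl⟩, -⟩
    exact dyadicCube_zero ℓ m
  obtain ⟨ℓ, m, rfl⟩ := hQ
  obtain ⟨L, hL⟩ := exists_lt_volume_dyadicCube hn hC
  set x : Fin n → ℝ := fun i => 2 ^ ℓ * m i
  have hx : x ∈ dyadicCube n ℓ m := fun i =>
    ⟨le_rfl, mul_lt_mul_of_pos_left (lt_add_one _) (zpow_pos two_pos ℓ)⟩
  have hlevel : ∀ k : ℤ, {Q' | ∃ m', Q' = dyadicCube n k m' ∧ x ∈ Q'}.Subsingleton := by
    rintro k _ ⟨m₁, rfl, h₁⟩ _ ⟨m₂, rfl, h₂⟩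
    exact (dyadicCube_subset_of_le le_rfl h₁ h₂).antisymm (dyadicCube_subset_of_le le_rfl h₂ h₁)
  refine ((finite_Icc ℓ L).biUnion fun k _ => (hlevel k).finite).subset ?_
  rintro _ ⟨⟨ℓ', m', rfl⟩, hsub, hvol⟩
  have hℓℓ' : ℓ ≤ ℓ' :=
    (volume_dyadicCube_le_volume_dyadicCube_iff hn m m').1 (measure_mono hsub)
  have hℓ'L : ℓ' < L := lt_of_not_ge fun h =>
    (((volume_dyadicCube_le_volume_dyadicCube_iff hn 0 m').2 h).trans hvol).not_gt hL
  exact mem_biUnion ⟨hℓℓ', hℓ'L.le⟩ ⟨m', rfl, hsub hx⟩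

end Dyadic

theorem dyadic_hl_constant_eq_one (n : ℕ) :
    (∀ F : Set (Fin n → ℝ) → ℝ≥0∞, ∀ r : ℝ≥0∞, 0 < r → r ≠ ⊤ →
      volume {x | r < hlMax
          (fun x => {Q | (∃ ℓ m, Q = dyadicCube n ℓ m) ∧ x ∈ Q}) (volume ·) F x} ≤
        1 * r⁻¹ * hlNorm {Q | ∃ ℓ m, Q = dyadicCube n ℓ m} F) ∧
    (∀ c : ℝ≥0∞,
      (∀ F : Set (Fin n → ℝ) → ℝ≥0∞, ∀ r : ℝ≥0∞, 0 < r → r ≠ ⊤ →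
        volume {x | r < hlMax
            (fun x => {Q | (∃ ℓ m, Q = dyadicCube n ℓ m) ∧ x ∈ Q}) (volume ·) F x} ≤
          c * r⁻¹ * hlNorm {Q | ∃ ℓ m, Q = dyadicCube n ℓ m} F) → 1 ≤ c) := by
  refine ⟨fun F r hr0 hr => ?_, fun c hc => ?_⟩
  · rw [one_mul]
    exact measure_lt_hlMax_le_of_nested volume countable_dyadicCubes
      (fun _ hQ _ hQ' => dyadicCubes_nested hQ hQ')
      (fun _ hQ _ hC => finite_dyadicCubes_superset_volume_le hQ hC) F hr0.ne' hr
  · refine one_le_of_measure_lt_hlMax_le volume _ _ ?_ (volume_dyadicCube_ne_zero 0 0)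
      (volume_dyadicCube_ne_top 0 0) hc
    exact fun _ hx => ⟨⟨0, 0, rfl⟩, hx⟩
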